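/- arXiv:1606.07860 — 5 statements merged into one kernel-verified Lean document; each statement's English description precedes it below -/
import Mathlib

section
/- If circle a is a proper part of circle b, circle b is discrete from circle c, and circle a is in contact with circle c (all radii positive), then a is a tangential proper part of b, a is externally connected to c, and b is externally connected to c. -/
structure Circ where
  center : ℝ × ℝ
  radius : ℝ

noncomputable def Δ (a b : Circ) : ℝ :=
  (a.center.1 - b.center.1)^2 + (a.center.2 - b.center.2)^2

def C (u v : Circ) : Prop := Δ u v ≤ (u.radius + v.radius)^2
def DR (u v : Circ) : Prop := Δ u v ≥ (u.radius + v.radius)^2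
def EC (u v : Circ) : Prop := Δ u v = (u.radius + v.radius)^2
def PP (u v : Circ) : Prop := Δ u v ≤ (u.radius - v.radius)^2 ∧ u.radius < v.radius
def TPP (u v : Circ) : Prop := Δ u v = (u.radius - v.radius)^2 ∧ u.radius < v.radius

theorem refine_topology (a b c : Circ)
    (ha : 0 < a.radius) (hb : 0 < b.radius) (hc : 0 < c.radius)
    (h1 : PP a b) (h2 : DR b c) (h3 : C a c) :
    TPP a b ∧ EC a c ∧ EC b c := by
  obtain ⟨h1d, h1r⟩ := h1
  set a1 := a.center.1; set a2 := a.center.2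
  set b1 := b.center.1; set b2 := b.center.2
  set c1 := c.center.1; set c2 := c.center.2
  have hΔab : Δ a b = (a1-b1)^2 + (a2-b2)^2 := rfl
  have hΔac : Δ a c = (a1-c1)^2 + (a2-c2)^2 := rfl
  have hΔbc : Δ b c = (b1-c1)^2 + (b2-c2)^2 := rfl
  have hab0 : (0:ℝ) ≤ Δ a b := by rw [hΔab]; positivity
  have hac0 : (0:ℝ) ≤ Δ a c := by rw [hΔac]; positivity
  have hbc0 : (0:ℝ) ≤ Δ b c := by rw [hΔbc]; positivity
  set dab := Real.sqrt (Δ a b) with hdab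
  set dac := Real.sqrt (Δ a c) with hdac
  set dbc := Real.sqrt (Δ b c) with hdbc
  have sqab : dab^2 = Δ a b := Real.sq_sqrt hab0
  have sqac : dac^2 = Δ a c := Real.sq_sqrt hac0
  have sqbc : dbc^2 = Δ b c := Real.sq_sqrt hbc0
  have dab0 : 0 ≤ dab := Real.sqrt_nonneg _
  have dac0 : 0 ≤ dac := Real.sqrt_nonneg _
  have dbc0 : 0 ≤ dbc := Real.sqrt_nonneg _
  -- bounds
  have h1' : dab ≤ b.radius - a.radius := by
    have := Real.sqrt_le_sqrt h1d
    rwa [show (a.radius - b.radius)^2 = (b.radius - a.radius)^2 by ring,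
      Real.sqrt_sq (by linarith)] at this
  have h3' : dac ≤ a.radius + c.radius := by
    have := Real.sqrt_le_sqrt h3
    rwa [Real.sqrt_sq (by linarith)] at this
  have h2' : b.radius + c.radius ≤ dbc := by
    have := Real.sqrt_le_sqrt h2
    rwa [Real.sqrt_sq (by linarith)] at this
  -- Cauchy–Schwarz
  set t := (b1-a1)*(a1-c1) + (b2-a2)*(a2-c2) with ht
  have hcs2 : t^2 ≤ Δ a b * Δ a c := by
    rw [hΔab, hΔac, ht]
    nlinarith [sq_nonneg ((b1-a1)*(a2-c2) - (b2-a2)*(a1-c1))]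
  have hcs : t ≤ dab * dac := by
    calc t ≤ |t| := le_abs_self t
    _ = Real.sqrt (t^2) := (Real.sqrt_sq_eq_abs t).symm
    _ ≤ Real.sqrt (Δ a b * Δ a c) := Real.sqrt_le_sqrt hcs2
    _ = dab * dac := by rw [Real.sqrt_mul hab0]
  -- triangle inequality
  have hexp : Δ b c = Δ a b + Δ a c + 2*t := by rw [hΔab, hΔac, hΔbc, ht]; ring
  have htri : dbc ≤ dab + dac := by
    rw [hdbc, show dab + dac = Real.sqrt ((dab+dac)^2) from
      (Real.sqrt_sq (by linarith)).symm]
    apply Real.sqrt_le_sqrt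
    have hx : (dab+dac)^2 = Δ a b + Δ a c + 2*(dab*dac) := by
      rw [← sqab, ← sqac]; ring
    rw [hexp, hx]; linarith
  -- squeeze
  have e1 : dab = b.radius - a.radius := by linarith
  have e2 : dac = a.radius + c.radius := by linarith
  have e3 : dbc = b.radius + c.radius := by linarith
  refine ⟨⟨?_, h1r⟩, ?_, ?_⟩
  · rw [← sqab, e1]; ring
  · rw [EC, ← sqac, e2]
  · rw [EC, ← sqbc, e3]
end

section
/- If circle a is a proper part of circle b, b is discrete from c, and a is in contact with c (all radii positive), then the centers of a, b, and c are collinear. -/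
def Collin (p q s : ℝ × ℝ) : Prop :=
  (q.1 - p.1) * (s.2 - p.2) = (q.2 - p.2) * (s.1 - p.1)

theorem centers_collinear (a b c : Circ)
    (ha : 0 < a.radius) (hb : 0 < b.radius) (hc : 0 < c.radius)
    (h1 : PP a b) (h2 : DR b c) (h3 : C a c) :
    Collin a.center b.center c.center := by
  obtain ⟨h1, hr⟩ := h1
  unfold Δ at h1
  unfold DR Δ at h2
  unfold C Δ at h3
  unfold Collin
  obtain ⟨⟨ax, ay⟩, ra⟩ := a
  obtain ⟨⟨bx, by'⟩, rb⟩ := b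
  obtain ⟨⟨cx, cy⟩, rc⟩ := c
  simp only at h1 h2 h3 ha hb hc hr ⊢
  have hab : (bx - ax)^2 + (by' - ay)^2 ≤ (rb - ra)^2 := by nlinarith [h1]
  have hac : (cx - ax)^2 + (cy - ay)^2 ≤ (ra + rc)^2 := by nlinarith [h3]
  set ux := bx - ax with hux
  set uy := by' - ay with huy
  set vx := cx - ax with hvx
  set vy := cy - ay with hvy
  have h0 : (0:ℝ) ≤ rb - ra := by linarith
  have h0' : (0:ℝ) ≤ ra + rc := by linarith
  have hkey : (rb - ra) * (ra + rc) ≤ -(ux * vx + uy * vy) := by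
    have e : (bx - cx)^2 + (by' - cy)^2 =
        (ux^2 + uy^2) + (vx^2 + vy^2) - 2 * (ux * vx + uy * vy) := by
      rw [hux, huy, hvx, hvy]; ring
    rw [e] at h2
    nlinarith [hab, hac, h2]
  have hs2 : ((rb - ra) * (ra + rc))^2 ≤ (ux * vx + uy * vy)^2 := by
    nlinarith [hkey, mul_nonneg h0 h0']
  have hprod : (ux^2 + uy^2) * (vx^2 + vy^2) ≤ (ux * vx + uy * vy)^2 :=
    calc (ux^2 + uy^2) * (vx^2 + vy^2)
        ≤ (rb - ra)^2 * (ra + rc)^2 :=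
          mul_le_mul hab hac (by positivity) (by positivity)
      _ = ((rb - ra) * (ra + rc))^2 := by ring
      _ ≤ (ux * vx + uy * vy)^2 := hs2
  have hL : (ux * vy - uy * vx)^2 =
      (ux^2 + uy^2) * (vx^2 + vy^2) - (ux * vx + uy * vy)^2 := by ring
  have hle : (ux * vy - uy * vx)^2 ≤ 0 := by linarith
  have hcross : ux * vy - uy * vx = 0 :=
    sq_eq_zero_iff.mp (le_antisymm hle (sq_nonneg _))
  linarith [hcross]
end

section
/- The polynomial encoding of RCC part-of coincides with set containment: for circles a and b with positive radii, the closed disc of a is a subset of the closed disc of b if and only if Δ(a,b) ≤ (r_a - r_b)² and r_a ≤ r_b. -/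
def closedDisc (c : Circ) : Set (ℝ × ℝ) :=
  {p | (p.1 - c.center.1)^2 + (p.2 - c.center.2)^2 ≤ c.radius^2}

/-! Identify the plane with `ℂ`, where `closedDisc c` becomes the closed ball of radius `c.radius`.
In any nontrivial real normed space, `closedBall x r ⊆ closedBall y s` forces `dist x y + r ≤ s`:
the point of `closedBall x r` on the ray from `y` through `x` lies at distance `dist x y + r`
from `y`. With `dist = √Δ`, the inequality `√Δ + r_a ≤ r_b` is the polynomial condition. -/

open Metric

section NormedSpace

variable {E : Type*} [NormedAddCommGroup E] [NormedSpace ℝ E] [Nontrivial E]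

theorem exists_sameRay_norm_eq (u : E) {r : ℝ} (hr : 0 ≤ r) :
    ∃ v : E, SameRay ℝ u v ∧ ‖v‖ = r := by
  rcases eq_or_ne u 0 with rfl | hu
  · obtain ⟨v, hv⟩ := exists_norm_eq E hr
    exact ⟨v, SameRay.zero_left v, hv⟩
  · refine ⟨(r / ‖u‖) • u, SameRay.sameRay_nonneg_smul_right u (by positivity), ?_⟩
    rw [norm_smul, Real.norm_of_nonneg (by positivity), div_mul_cancel₀ _ (norm_ne_zero_iff.2 hu)]

theorem closedBall_subset_closedBall_iff {x y : E} {r s : ℝ} (hr : 0 ≤ r) :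
    closedBall x r ⊆ closedBall y s ↔ dist x y + r ≤ s := by
  refine ⟨fun h => ?_, fun h => closedBall_subset_closedBall' (by linarith)⟩
  obtain ⟨v, hv, hvr⟩ := exists_sameRay_norm_eq (x - y) hr
  have hmem : x + v ∈ closedBall x r := by
    rw [mem_closedBall, dist_eq_norm, add_sub_cancel_left, hvr]
  calc dist x y + r = ‖(x - y) + v‖ := by rw [hv.norm_add, hvr, dist_eq_norm]
    _ = dist (x + v) y := by rw [dist_eq_norm, sub_add_eq_add_sub]
    _ ≤ s := h hmem

end NormedSpace

theorem dist_equivRealProd_symm (p q : ℝ × ℝ) :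
    dist (Complex.equivRealProd.symm p) (Complex.equivRealProd.symm q) =
      √((p.1 - q.1) ^ 2 + (p.2 - q.2) ^ 2) := by
  simp [Complex.dist_eq_re_im]

theorem closedDisc_eq_preimage_closedBall (c : Circ) (hc : 0 ≤ c.radius) :
    closedDisc c =
      Complex.equivRealProd.symm ⁻¹' closedBall (Complex.equivRealProd.symm c.center) c.radius := by
  ext p
  rw [Set.mem_preimage, mem_closedBall, dist_equivRealProd_symm, Real.sqrt_le_left hc]
  rfl

theorem part_of_iff_subset (a b : Circ) (ha : 0 < a.radius) (hb : 0 < b.radius) :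
    closedDisc a ⊆ closedDisc b ↔ Δ a b ≤ (a.radius - b.radius)^2 ∧ a.radius ≤ b.radius := by
  rw [closedDisc_eq_preimage_closedBall a ha.le, closedDisc_eq_preimage_closedBall b hb.le,
    Equiv.preimage_subset, closedBall_subset_closedBall_iff ha.le, dist_equivRealProd_symm,
    ← le_sub_iff_add_le, Real.sqrt_le_iff, sub_nonneg, sub_sq_comm b.radius, and_comm]
  rfl
end

section
/- The polynomial encoding of EC coincides with external tangency: for circles a and b with positive radii, Δ(a,b) = (r_a + r_b)² if and only if the closed discs of a and b intersect in exactly one point. -/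
open Metric Complex

section

variable {E : Type*} [NormedAddCommGroup E] [NormedSpace ℝ E] {x y : E} {r s : ℝ}

theorem subsingleton_closedBall_inter_closedBall [StrictConvexSpace ℝ E] (h : r + s ≤ dist x y) :
    (closedBall x r ∩ closedBall y s).Subsingleton := by
  rintro p ⟨hpx, hpy⟩ q ⟨hqx, hqy⟩
  by_contra hpq
  have hx : (1 / 2 : ℝ) • p + (1 / 2 : ℝ) • q ∈ ball x r :=
    combo_mem_ball_of_ne hpx hqx hpq (by norm_num) (by norm_num) (by norm_num)
  have hy : (1 / 2 : ℝ) • p + (1 / 2 : ℝ) • q ∈ closedBall y s :=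
    convex_closedBall y s hpy hqy (by norm_num) (by norm_num) (by norm_num)
  exact (dist_lt_add_of_nonempty_ball_inter_closedBall ⟨_, hx, hy⟩).not_ge h

theorem nontrivial_closedBall_inter_closedBall [Nontrivial E] (hr : 0 < r) (hs : 0 < s)
    (h : dist x y < r + s) : (closedBall x r ∩ closedBall y s).Nontrivial := by
  have : PerfectSpace E := perfectSpace_of_module ℝ E
  obtain ⟨z, hz⟩ : (ball x r ∩ ball y s).Nonempty :=
    Set.not_disjoint_iff_nonempty_inter.1 ((disjoint_ball_ball_iff hr hs).not.2 h.not_ge)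
  have hopen : ball x r ∩ ball y s ∈ nhds z := (isOpen_ball.inter isOpen_ball).mem_nhds hz
  exact (infinite_of_mem_nhds z hopen).nontrivial.mono
    (Set.inter_subset_inter ball_subset_closedBall ball_subset_closedBall)

theorem existsUnique_mem_closedBall_and_mem_closedBall_iff [StrictConvexSpace ℝ E] [Nontrivial E]
    (hr : 0 < r) (hs : 0 < s) :
    (∃! p, p ∈ closedBall x r ∧ p ∈ closedBall y s) ↔ dist x y = r + s := by
  constructor
  · intro hunique
    obtain ⟨p, hp⟩ := hunique.exists
    refine (dist_le_add_of_nonempty_closedBall_inter_closedBall ⟨p, hp⟩).antisymm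
      (not_lt.1 fun hlt => ?_)
    obtain ⟨q, hq, q', hq', hne⟩ := nontrivial_closedBall_inter_closedBall hr hs hlt
    exact hne (hunique.unique hq hq')
  · intro h
    obtain ⟨p, hp⟩ : (closedBall x r ∩ closedBall y s).Nonempty :=
      Set.not_disjoint_iff_nonempty_inter.1
        ((disjoint_closedBall_closedBall_iff hr.le hs.le).not.2 h.not_gt)
    exact ⟨p, hp, fun q hq => subsingleton_closedBall_inter_closedBall h.ge hq hp⟩

end

theorem dist_equivRealProd_symm_sq (p q : ℝ × ℝ) :
    dist (equivRealProd.symm p) (equivRealProd.symm q) ^ 2 = (p.1 - q.1) ^ 2 + (p.2 - q.2) ^ 2 := by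
  rw [dist_eq_re_im, Real.sq_sqrt (by positivity)]
  simp

theorem mem_closedDisc_iff {c : Circ} (hc : 0 ≤ c.radius) (p : ℝ × ℝ) :
    p ∈ closedDisc c ↔ equivRealProd.symm p ∈ closedBall (equivRealProd.symm c.center) c.radius := by
  rw [mem_closedBall, ← pow_le_pow_iff_left₀ dist_nonneg hc two_ne_zero,
    dist_equivRealProd_symm_sq]
  rfl

theorem Δ_eq_dist_sq (a b : Circ) :
    Δ a b = dist (equivRealProd.symm a.center) (equivRealProd.symm b.center) ^ 2 :=
  (dist_equivRealProd_symm_sq _ _).symm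

theorem ec_iff_one_point (a b : Circ) (ha : 0 < a.radius) (hb : 0 < b.radius) :
    Δ a b = (a.radius + b.radius)^2 ↔
      ∃! p : ℝ × ℝ, p ∈ closedDisc a ∧ p ∈ closedDisc b := by
  rw [Δ_eq_dist_sq, sq_eq_sq₀ dist_nonneg (by positivity),
    ← existsUnique_mem_closedBall_and_mem_closedBall_iff ha hb]
  exact (Equiv.existsUnique_congr equivRealProd.symm fun p => by
    rw [mem_closedDisc_iff ha.le, mem_closedDisc_iff hb.le]).symm
end

section
/- Motion ramification: if circle a is a tangential proper part of circle b and circle b is externally connected to circle c (all radii positive), then a is discrete from c, i.e., either DC(a,c) or EC(a,c). -/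
def DC (u v : Circ) : Prop := Δ u v > (u.radius + v.radius)^2
theorem motion_ramification (a b c : Circ)
    (ha : 0 < a.radius) (hb : 0 < b.radius) (hc : 0 < c.radius)
    (h1 : TPP a b) (h2 : EC b c) :
    DC a c ∨ EC a c := by
  obtain ⟨h1, hlt⟩ := h1
  unfold EC at h2
  have key : Δ a c ≥ (a.radius + c.radius)^2 := by
    unfold Δ at h1 h2 ⊢
    nlinarith [sq_nonneg ((b.center.1 - a.center.1) * (c.center.2 - b.center.2) -
        (b.center.2 - a.center.2) * (c.center.1 - b.center.1)),
      sq_nonneg ((b.center.1 - a.center.1) * (c.center.1 - b.center.1) +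
        (b.center.2 - a.center.2) * (c.center.2 - b.center.2) +
        (b.radius - a.radius) * (b.radius + c.radius)),
      mul_pos (sub_pos.mpr hlt) (add_pos hb hc)]
  rcases lt_or_eq_of_le key with h | h
  · exact Or.inl h
  · exact Or.inr h.symm
end
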